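/- arXiv:1506.00810 — 3 statements merged into one kernel-verified Lean document; each statement's English description precedes it below -/
import Mathlib

section
/- Let P, Q, R, S be four points on a line l in the affine plane over a field k, with R ≠ S and neither R nor S equal to P or Q, and let A be a point not on l. Let B be the intersection of the line through P parallel to ⟨A,R⟩ with the line through S parallel to ⟨A,Q⟩. Then the intersection point C of the line ⟨A,B⟩ with l satisfies (C−Q)/(C−R) = (Q−S)/(R−P), where the ratios are taken as scalars along l. -/
open Classical in
noncomputable def ratio {k : Type*} [Field k] (X Y Z W : k × k) : k :=
  if h : ∃ r : k, X - Y = r • (Z - W) then h.choose else 0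

set_option maxRecDepth 20000
set_option maxHeartbeats 1000000

lemma ratio_eq {k : Type*} [Field k] {X Y Z W : k × k} (hZW : Z ≠ W) {r : k}
    (h : X - Y = r • (Z - W)) : ratio X Y Z W = r := by
  have hex : ∃ r : k, X - Y = r • (Z - W) := ⟨r, h⟩
  rw [ratio, dif_pos hex]
  have h2 := hex.choose_spec
  have hv : Z - W ≠ 0 := sub_ne_zero.mpr hZW
  have h3 : (hex.choose - r) • (Z - W) = 0 := by
    rw [sub_smul, ← h2, h, sub_self]
  rcases smul_eq_zero.mp h3 with h4 | h4
  · exact sub_eq_zero.mp h4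
  · exact absurd h4 hv

theorem stmt0 {k : Type*} [Field k] (P Q R S A B C : k × k)
    (hRS : R ≠ S) (hRP : R ≠ P) (hRQ : R ≠ Q) (hSP : S ≠ P) (hSQ : S ≠ Q)
    (hP : P ∈ affineSpan k ({R, S} : Set (k × k)))
    (hQ : Q ∈ affineSpan k ({R, S} : Set (k × k)))
    (hA : A ∉ affineSpan k ({R, S} : Set (k × k)))
    (hB1 : ∃ s : k, B = P + s • (R - A))
    (hB2 : ∃ t : k, B = S + t • (Q - A))
    (hC1 : C ∈ affineSpan k ({R, S} : Set (k × k)))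
    (hC2 : C ∈ affineSpan k ({A, B} : Set (k × k)))
    (hCR : C ≠ R) :
    ratio C Q C R = ratio Q S R P := by
  set v : k × k := S - R with hv
  set w : k × k := A - R with hw
  have hvne : v ≠ 0 := sub_ne_zero.mpr (Ne.symm hRS)
  have hRmem : R ∈ affineSpan k ({R, S} : Set (k × k)) :=
    left_mem_affineSpan_pair k R S
  -- extract scalar coordinates
  have hp : ∃ p : k, P - R = p • v := by
    have := AffineSubspace.vsub_mem_direction hP hRmem
    rw [direction_affineSpan, mem_vectorSpan_pair_rev] at this
    obtain ⟨p, hp⟩ := this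
    exact ⟨p, hp.symm⟩
  have hq : ∃ q : k, Q - R = q • v := by
    have := AffineSubspace.vsub_mem_direction hQ hRmem
    rw [direction_affineSpan, mem_vectorSpan_pair_rev] at this
    obtain ⟨q, hq⟩ := this
    exact ⟨q, hq.symm⟩
  have hc : ∃ c : k, C - R = c • v := by
    have := AffineSubspace.vsub_mem_direction hC1 hRmem
    rw [direction_affineSpan, mem_vectorSpan_pair_rev] at this
    obtain ⟨c, hc⟩ := this
    exact ⟨c, hc.symm⟩
  obtain ⟨p, hp⟩ := hp
  obtain ⟨q, hq⟩ := hq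
  obtain ⟨c, hc⟩ := hc
  -- independence of v and w
  have hAnot : ∀ r : k, w ≠ r • v := by
    intro r hr
    apply hA
    rw [← AffineSubspace.vsub_right_mem_direction_iff_mem hRmem,
      direction_affineSpan, mem_vectorSpan_pair_rev]
    exact ⟨r, hr.symm⟩
  have indep : ∀ a b : k, a • v + b • w = 0 → a = 0 ∧ b = 0 := by
    intro a b h
    by_cases hb : b = 0
    · subst hb
      simp only [zero_smul, add_zero] at h
      rcases smul_eq_zero.mp h with h | h
      · exact ⟨h, rfl⟩
      · exact absurd h hvne
    · exfalso
      have h1 : b • w = (-a) • v := by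
        rw [neg_smul, eq_neg_iff_add_eq_zero, add_comm]; exact h
      have h2 : w = (-a / b) • v := by
        rw [div_eq_inv_mul, mul_smul, ← h1, inv_smul_smul₀ hb]
      exact hAnot _ h2
  -- B equations
  obtain ⟨s, hb1⟩ := hB1
  obtain ⟨t, hb2⟩ := hB2
  have hBR1 : B - R = p • v - s • w := by
    have h1 : B - R = (P - R) + s • (R - A) := by rw [hb1]; abel
    have h2 : R - A = -w := by rw [hw]; abel
    rw [h1, hp, h2, smul_neg, sub_eq_add_neg]
  have hBR2 : B - R = (1 + t * q) • v - t • w := by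
    have h1 : B - R = (S - R) + t • (Q - A) := by rw [hb2]; abel
    have h2 : Q - A = q • v - w := by
      have h3 : Q - A = (Q - R) - (A - R) := by abel
      rw [h3, hq, hw]
    rw [h1, h2, ← hv, smul_sub, smul_smul, add_smul, one_smul]
    abel
  have key1 : (p - 1 - t * q) • v + (t - s) • w = 0 := by
    have h := hBR1.symm.trans hBR2
    linear_combination (norm := module) h
  obtain ⟨e1, e2⟩ := indep _ _ key1
  have hts : t = s := sub_eq_zero.mp e2
  have hpq : p - 1 - s * q = 0 := by rw [← hts]; exact e1
  -- C equation
  have hCAB : ∃ u : k, C - A = u • (B - A) := by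
    have hAmem : A ∈ affineSpan k ({A, B} : Set (k × k)) :=
      left_mem_affineSpan_pair k A B
    have := AffineSubspace.vsub_mem_direction hC2 hAmem
    rw [direction_affineSpan, mem_vectorSpan_pair_rev] at this
    obtain ⟨u, hu⟩ := this
    exact ⟨u, hu.symm⟩
  obtain ⟨u, hu⟩ := hCAB
  have key2 : (u * p - c) • v + (1 - u - u * s) • w = 0 := by
    have hCA : C - A = c • v - w := by
      have h3 : C - A = (C - R) - (A - R) := by abel
      rw [h3, hc, hw]
    have hBA : B - A = p • v - s • w - w := by
      have h3 : B - A = (B - R) - (A - R) := by abel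
      rw [h3, hBR1, hw]
    have h := hu
    rw [hCA, hBA] at h
    linear_combination (norm := module) -h
  obtain ⟨f1, f2⟩ := indep _ _ key2
  have g1 : u * p = c := sub_eq_zero.mp f1
  have g2 : u * (1 + s) = 1 := by linear_combination -f2
  -- scalar nonvanishing facts
  have hcne : c ≠ 0 := by
    intro h0
    rw [h0] at hc
    simp only [zero_smul] at hc
    exact hCR (sub_eq_zero.mp hc)
  have hqne : q ≠ 0 := by
    intro h0
    rw [h0] at hq
    simp only [zero_smul] at hq
    exact hRQ (sub_eq_zero.mp hq).symm
  have hpne : p ≠ 0 := by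
    intro h0
    rw [h0] at hp
    simp only [zero_smul] at hp
    exact hRP (sub_eq_zero.mp hp).symm
  -- compute the ratios
  have hCQ : C - Q = ((c - q) / c) • (C - R) := by
    have h1 : C - Q = (c - q) • v := by
      have h3 : C - Q = (C - R) - (Q - R) := by abel
      rw [h3, hc, hq, sub_smul]
    rw [h1, hc, smul_smul, div_mul_cancel₀ _ hcne]
  have hQS : Q - S = ((1 - q) / p) • (R - P) := by
    have h1 : Q - S = (q - 1) • v := by
      have h3 : Q - S = (Q - R) - (S - R) := by abel
      rw [h3, hq, ← hv, sub_smul, one_smul]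
    have h2 : R - P = (-p) • v := by
      have h3 : R - P = -(P - R) := by abel
      rw [h3, hp, neg_smul]
    rw [h1, h2, smul_smul]
    congr 1
    field_simp
    ring
  rw [ratio_eq hCR hCQ, ratio_eq hRP hQS]
  rw [div_eq_div_iff hcne hpne]
  have hkey : c * (s + 1) = 1 + s * q := by
    linear_combination (-(s + 1)) * g1 + p * g2 + hpq
  linear_combination (c - q) * hpq + q * hkey
end

section
/- Degenerate five-axes theorem: let A₁,…,A₅ be points in the affine plane with A₅ on the line ⟨A₁,A₄⟩ but no other three collinear, and assume lᵢ = ⟨A_{i−1},A_{i+1}⟩ is not parallel to l_{i+1} = ⟨Aᵢ,A_{i+2}⟩ for all i mod 5. Then the five axes g₁,…,g₅ (with g₅ defined by the tangential construction at A₅) lie in a pencil. -/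
def InPencil {k : Type*} [Field k] {ι : Type*} (g : ι → AffineSubspace k (k × k)) : Prop :=
  (∃ p, ∀ i, p ∈ g i) ∨ (∀ i j, (g i).Parallel (g j))

/-!
The configuration is invariant under affine changes of coordinates, so we may assume
`A₁ = 0`, `A₂ = (1, 0)`, `A₃ = (0, 1)`; then `A₄ = (a, b)` and, `A₅` lying on `A₁A₄`, `A₅ = L • A₄`.
On `lᵢ`, with `t` and `s` the affine parameters of `B_{i-1,i}` and `B_{i,i+1}`, the ratio condition
places `Cᵢ` at parameter `s / (s - t + 1)`; `t` and `s` are intersection parameters of lines, hence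
quotients of cross products. So every axis is an explicit line, and a direct computation shows that
all five pass through the point `[a²L : b(aL - 1) : a + aL + bL - b - 1]` of the projective
closure: they are concurrent, or parallel when the last coordinate vanishes.
-/

open AffineMap
open scoped Affine

section

variable {k : Type*} [Field k]

def cross (u v : k × k) : k := u.1 * v.2 - u.2 * v.1

theorem exists_eq_smul_of_cross_eq_zero {u v : k × k} (hu : u ≠ 0) (h : cross u v = 0) :
    ∃ c : k, v = c • u := by
  unfold cross at h
  by_cases h₁ : u.1 = 0
  · have h₂ : u.2 ≠ 0 := fun h₂ => hu (Prod.ext h₁ h₂)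
    refine ⟨v.2 / u.2, Prod.ext ?_ ?_⟩
    · have : v.1 = 0 := by simpa [h₁, h₂] using h
      simp [this, h₁]
    · simp [h₂]
  · refine ⟨v.1 / u.1, Prod.ext ?_ ?_⟩
    · simp [h₁]
    · simp only [Prod.smul_snd, smul_eq_mul]
      field_simp
      linear_combination h

theorem collinear_iff_cross_eq_zero {p q r : k × k} :
    Collinear k {p, q, r} ↔ cross (q - p) (r - p) = 0 := by
  rw [collinear_iff_of_mem (Set.mem_insert p _)]
  constructor
  · rintro ⟨v, hv⟩
    obtain ⟨a, rfl⟩ := hv q (by simp)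
    obtain ⟨b, rfl⟩ := hv r (by simp)
    simp [cross]
    ring
  · intro h
    simp only [Set.mem_insert_iff, Set.mem_singleton_iff, forall_eq_or_imp, forall_eq,
      vadd_eq_add]
    rcases eq_or_ne q p with rfl | hqp
    · exact ⟨r - q, ⟨0, by simp⟩, ⟨0, by simp⟩, ⟨1, by simp⟩⟩
    obtain ⟨c, hc⟩ := exists_eq_smul_of_cross_eq_zero (sub_ne_zero.2 hqp) h
    exact ⟨q - p, ⟨0, by simp⟩, ⟨1, by simp⟩, ⟨c, by rw [← hc]; abel⟩⟩

theorem mem_line_of_cross_eq_zero {p q r : k × k} (hpq : p ≠ q)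
    (h : cross (q - p) (r - p) = 0) : r ∈ line[k, p, q] := by
  obtain ⟨c, hc⟩ := exists_eq_smul_of_cross_eq_zero (sub_ne_zero.2 hpq.symm) h
  rw [mem_affineSpan_pair_iff_exists_lineMap_eq]
  exact ⟨c, by rw [lineMap_apply, vsub_eq_sub, vadd_eq_add, ← hc]; abel⟩

theorem parallel_of_cross_eq_zero {p q p' q' : k × k} (hpq : p ≠ q) (hpq' : p' ≠ q')
    (h : cross (q - p) (q' - p') = 0) : line[k, p, q] ∥ line[k, p', q'] := by
  obtain ⟨c, hc⟩ := exists_eq_smul_of_cross_eq_zero (sub_ne_zero.2 hpq.symm) h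
  have hc0 : c ≠ 0 := by
    rintro rfl
    exact hpq' (sub_eq_zero.1 (by simpa using hc)).symm
  rw [AffineSubspace.affineSpan_pair_parallel_iff_exists_unit_smul']
  exact ⟨Units.mk0 c hc0, by simp [hc]⟩

theorem lineMap_sub_lineMap (p q : k × k) (a b : k) :
    lineMap p q a - lineMap p q b = (a - b) • (q - p) := by
  simp only [lineMap_apply, vsub_eq_sub, vadd_eq_add]
  module

theorem mul_cross_eq_of_add_smul_eq {p p' u u' : k × k} {s t : k}
    (h : p + s • u = p' + t • u') : s * cross u u' = cross (p' - p) u' := by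
  have := congrArg (fun x => cross (x - p) u') h
  simp only [cross, Prod.fst_add, Prod.snd_add, Prod.fst_sub, Prod.snd_sub, Prod.smul_fst,
    Prod.smul_snd, smul_eq_mul] at this ⊢
  linear_combination this

theorem mul_cross_eq_of_lineMap_mem {p q p' q' : k × k} {t : k}
    (h : lineMap p q t ∈ line[k, p', q']) :
    t * cross (q - p) (q' - p') = cross (p' - p) (q' - p') := by
  obtain ⟨r, hr⟩ := mem_affineSpan_pair_iff_exists_lineMap_eq.1 h
  refine mul_cross_eq_of_add_smul_eq (t := r) ?_
  simp only [lineMap_apply, vsub_eq_sub, vadd_eq_add] at hr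
  rw [add_comm p, add_comm p', hr]

theorem cross_div_smul_add_sub_eq_zero {d p r y : k × k} {n e : k} (he : e ≠ 0)
    (h : n * cross d y + e * cross (p - r) y = 0) : cross ((n / e) • d + p - r) y = 0 := by
  have key : cross ((n / e) • d + p - r) y = (n * cross d y + e * cross (p - r) y) / e := by
    simp only [cross, Prod.fst_add, Prod.snd_add, Prod.fst_sub, Prod.snd_sub, Prod.smul_fst,
      Prod.smul_snd, smul_eq_mul]
    field_simp
    ring
  rw [key, h, zero_div]

/-- `cross (qᵢ - pᵢ) (x - z • pᵢ) = 0` says that the point `[x : z]` of the projective closure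
lies on the line `pᵢqᵢ`; for `z = 0` it is a point at infinity and the lines are parallel. -/
theorem inPencil_of_cross_eq_zero {ι : Type*} {p q : ι → k × k} (hpq : ∀ i, p i ≠ q i)
    {x : k × k} {z : k} (hxz : x ≠ 0 ∨ z ≠ 0) (h : ∀ i, cross (q i - p i) (x - z • p i) = 0) :
    InPencil fun i => line[k, p i, q i] := by
  by_cases hz : z = 0
  · right
    have hpar : ∀ i, line[k, p i, q i] ∥ line[k, 0, x] := fun i =>
      parallel_of_cross_eq_zero (hpq i) (hxz.resolve_right (not_not.2 hz)).symm
        (by simpa [hz] using h i)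
    exact fun i j => (hpar i).trans (hpar j).symm
  · left
    refine ⟨z⁻¹ • x, fun i => mem_line_of_cross_eq_zero (hpq i) ?_⟩
    have hi := h i
    simp only [cross, Prod.fst_sub, Prod.snd_sub, Prod.smul_fst, Prod.smul_snd,
      smul_eq_mul] at hi ⊢
    field_simp
    linear_combination hi

theorem ratio_eq_of_sub_eq_smul {X Y Z W : k × k} {r : k} (hZW : Z - W ≠ 0)
    (h : X - Y = r • (Z - W)) : ratio X Y Z W = r := by
  have hex : ∃ r' : k, X - Y = r' • (Z - W) := ⟨r, h⟩
  rw [ratio, dif_pos hex]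
  exact smul_left_injective k hZW (hex.choose_spec.symm.trans h)

theorem sub_eq_smul_of_ratio_eq {X Y Z W : k × k} {r : k} (hr : r ≠ 0)
    (h : ratio X Y Z W = r) : X - Y = r • (Z - W) := by
  rw [ratio] at h
  split_ifs at h with hex
  · exact h ▸ hex.choose_spec
  · exact absurd h.symm hr

theorem ratio_lineMap {p q : k × k} (hpq : p ≠ q) {a b c d : k} (hcd : c ≠ d) :
    ratio (lineMap p q a) (lineMap p q b) (lineMap p q c) (lineMap p q d) = (a - b) / (c - d) := by
  refine ratio_eq_of_sub_eq_smul ?_ ?_ <;> rw [lineMap_sub_lineMap]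
  · exact smul_ne_zero (sub_ne_zero.2 hcd) (sub_ne_zero.2 hpq.symm)
  · rw [lineMap_sub_lineMap, smul_smul, div_mul_cancel₀ _ (sub_ne_zero.2 hcd)]

theorem mul_sub_add_one_eq_of_ratio_eq {p q : k × k} (hpq : p ≠ q) {t s u : k} (hs : s ≠ 0)
    (ht : t ≠ 1)
    (h : ratio (lineMap p q u) (lineMap p q t) (lineMap p q u) (lineMap p q s)
      = ratio (lineMap p q t) q (lineMap p q s) p) :
    u * (s - t + 1) = s := by
  have hr : ratio (lineMap p q t) q (lineMap p q s) p = (t - 1) / s := by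
    simpa using ratio_lineMap (a := t) (b := 1) (c := s) (d := 0) hpq hs
  -- `t ≠ 1` keeps the ratio away from `0`, the value `ratio` also takes when it is undefined.
  have hr0 : (t - 1) / s ≠ 0 := div_ne_zero (sub_ne_zero.2 ht) hs
  have key := sub_eq_smul_of_ratio_eq hr0 (h.trans hr)
  rw [lineMap_sub_lineMap, lineMap_sub_lineMap, smul_smul] at key
  have := smul_left_injective k (sub_ne_zero.2 hpq.symm) key
  field_simp at this
  linear_combination this

/-- On `lᵢ = p₁p₃` the points `B_{i-1,i} = lᵢ ∩ p₀p₂` and `B_{i,i+1} = lᵢ ∩ p₂p₄` have affine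
parameters `t = nₜ / dₜ` and `s = nₛ / dₛ`, and the ratio condition puts `Cᵢ` at parameter
`s / (s - t + 1)`; `axisNum / axisDen` is that parameter with the denominators cleared. -/
def axisNum (p₀ p₁ p₂ p₃ p₄ : k × k) : k :=
  cross (p₂ - p₁) (p₄ - p₂) * cross (p₃ - p₁) (p₂ - p₀)

def axisDen (p₀ p₁ p₂ p₃ p₄ : k × k) : k :=
  axisNum p₀ p₁ p₂ p₃ p₄ - cross (p₀ - p₁) (p₂ - p₀) * cross (p₃ - p₁) (p₄ - p₂)
    + cross (p₃ - p₁) (p₄ - p₂) * cross (p₃ - p₁) (p₂ - p₀)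

def axisPoint (p₀ p₁ p₂ p₃ p₄ : k × k) : k × k :=
  lineMap p₁ p₃ (axisNum p₀ p₁ p₂ p₃ p₄ / axisDen p₀ p₁ p₂ p₃ p₄)

theorem eq_axisPoint {p₀ p₁ p₂ p₃ p₄ Bm Bp C : k × k} (h₀₂ : p₀ ≠ p₂) (h₁₃ : p₁ ≠ p₃)
    (h₂₄ : p₂ ≠ p₄) (hpar₀ : ¬ line[k, p₀, p₂] ∥ line[k, p₁, p₃])
    (hpar₁ : ¬ line[k, p₁, p₃] ∥ line[k, p₂, p₄])
    (hcol₀ : ¬ Collinear k {p₃, p₀, p₂}) (hcol₁ : ¬ Collinear k {p₁, p₂, p₄})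
    (hBm : Bm ∈ line[k, p₀, p₂] ∧ Bm ∈ line[k, p₁, p₃])
    (hBp : Bp ∈ line[k, p₁, p₃] ∧ Bp ∈ line[k, p₂, p₄])
    (hC : C ∈ line[k, p₁, p₃] ∧ ratio C Bm C Bp = ratio Bm p₃ Bp p₁) :
    C = axisPoint p₀ p₁ p₂ p₃ p₄ ∧ axisDen p₀ p₁ p₂ p₃ p₄ ≠ 0 := by
  obtain ⟨t, rfl⟩ := mem_affineSpan_pair_iff_exists_lineMap_eq.1 hBm.2
  obtain ⟨s, rfl⟩ := mem_affineSpan_pair_iff_exists_lineMap_eq.1 hBp.1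
  obtain ⟨u, rfl⟩ := mem_affineSpan_pair_iff_exists_lineMap_eq.1 hC.1
  have ht := mul_cross_eq_of_lineMap_mem hBm.1
  have hs := mul_cross_eq_of_lineMap_mem hBp.2
  have hdt : cross (p₃ - p₁) (p₂ - p₀) ≠ 0 :=
    fun h => hpar₀ (parallel_of_cross_eq_zero h₁₃ h₀₂ h).symm
  have hds : cross (p₃ - p₁) (p₄ - p₂) ≠ 0 := fun h => hpar₁ (parallel_of_cross_eq_zero h₁₃ h₂₄ h)
  have hs0 : s ≠ 0 := by
    rintro rfl
    exact hcol₁ (collinear_insert_of_mem_affineSpan_pair (by simpa using hBp.2))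
  have ht1 : t ≠ 1 := by
    rintro rfl
    exact hcol₀ (collinear_insert_of_mem_affineSpan_pair (by simpa using hBm.1))
  have hu := mul_sub_add_one_eq_of_ratio_eq h₁₃ hs0 ht1 hC.2
  have hden : axisDen p₀ p₁ p₂ p₃ p₄
      = cross (p₃ - p₁) (p₄ - p₂) * cross (p₃ - p₁) (p₂ - p₀) * (s - t + 1) := by
    rw [axisDen, axisNum, ← hs, ← ht]
    ring
  have hden0 : axisDen p₀ p₁ p₂ p₃ p₄ ≠ 0 := by
    rw [hden]
    refine mul_ne_zero (mul_ne_zero hds hdt) fun h => hs0 ?_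
    rw [← hu, h, mul_zero]
  refine ⟨?_, hden0⟩
  rw [axisPoint]
  congr 1
  rw [eq_div_iff hden0, hden, axisNum, ← hs]
  linear_combination (cross (p₃ - p₁) (p₄ - p₂) * cross (p₃ - p₁) (p₂ - p₀)) * hu

theorem Collinear.map {V P V₂ P₂ : Type*} [AddCommGroup V] [Module k V] [AddTorsor V P]
    [AddCommGroup V₂] [Module k V₂] [AddTorsor V₂ P₂] {s : Set P} (h : Collinear k s)
    (f : P →ᵃ[k] P₂) : Collinear k (f '' s) := by
  unfold Collinear at h ⊢
  rw [← AffineMap.map_vectorSpan f]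
  have := (lift_rank_map_le f.linear (vectorSpan k s)).trans (Cardinal.lift_le.2 h)
  simpa using this

theorem AffineSubspace.Parallel.map {V P V₂ P₂ : Type*} [AddCommGroup V] [Module k V]
    [AddTorsor V P] [AddCommGroup V₂] [Module k V₂] [AddTorsor V₂ P₂]
    {s₁ s₂ : AffineSubspace k P} (h : s₁ ∥ s₂) (f : P →ᵃ[k] P₂) : s₁.map f ∥ s₂.map f := by
  obtain ⟨v, rfl⟩ := h
  refine ⟨f.linear v, ?_⟩
  rw [AffineSubspace.map_map, AffineSubspace.map_map]
  congr 1
  ext p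
  simp [AffineMap.map_vadd]

theorem InPencil.map {ι : Type*} {g : ι → AffineSubspace k (k × k)} (h : InPencil g)
    (f : (k × k) →ᵃ[k] (k × k)) : InPencil fun i => (g i).map f := by
  rcases h with ⟨p, hp⟩ | hpar
  · exact Or.inl ⟨f p, fun i => AffineSubspace.mem_map_of_mem f (hp i)⟩
  · exact Or.inr fun i j => (hpar i j).map f

theorem apply_sub_apply (F : (k × k) ≃ᵃ[k] (k × k)) (P Q : k × k) :
    F P - F Q = F.linear (P - Q) := by
  simpa using (F.toAffineMap.linearMap_vsub P Q).symm

theorem apply_add_smul_sub (F : (k × k) ≃ᵃ[k] (k × k)) (p q r : k × k) (s : k) :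
    F (p + s • (q - r)) = F p + s • (F q - F r) := by
  have := apply_sub_apply F (p + s • (q - r)) p
  rw [add_sub_cancel_left, map_smul, ← apply_sub_apply] at this
  rw [← this]
  abel

theorem ratio_map (F : (k × k) ≃ᵃ[k] (k × k)) (X Y Z W : k × k) :
    ratio (F X) (F Y) (F Z) (F W) = ratio X Y Z W := by
  have : (fun r : k => F X - F Y = r • (F Z - F W)) = fun r => X - Y = r • (Z - W) := by
    funext r
    rw [apply_sub_apply, apply_sub_apply, ← map_smul, F.linear.injective.eq_iff]
  simp only [ratio]
  rw [this]

theorem exists_affineEquiv_of_not_collinear {P Q R : k × k} (h : ¬ Collinear k {P, Q, R}) :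
    ∃ F : (k × k) ≃ᵃ[k] (k × k), F P = 0 ∧ F Q = (1, 0) ∧ F R = (0, 1) := by
  have hvw : cross (Q - P) (R - P) ≠ 0 := fun h' => h (collinear_iff_cross_eq_zero.2 h')
  let e : (k × k) →ₗ[k] (k × k) :=
    (LinearMap.fst k k k).smulRight (Q - P) + (LinearMap.snd k k k).smulRight (R - P)
  have he : Function.Injective e := by
    rw [← LinearMap.ker_eq_bot, LinearMap.ker_eq_bot']
    intro x hx
    have h₁ := congrArg Prod.fst hx
    have h₂ := congrArg Prod.snd hx
    simp only [e, LinearMap.add_apply, LinearMap.smulRight_apply, LinearMap.fst_apply,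
      LinearMap.snd_apply, Prod.fst_add, Prod.snd_add, Prod.smul_fst, Prod.smul_snd,
      smul_eq_mul, Prod.fst_zero, Prod.snd_zero] at h₁ h₂
    unfold cross at hvw
    ext
    · exact (mul_eq_zero.1 (by linear_combination (R - P).2 * h₁ - (R - P).1 * h₂)).resolve_right
        hvw
    · exact (mul_eq_zero.1 (by linear_combination (Q - P).1 * h₂ - (Q - P).2 * h₁)).resolve_right
        hvw
  let G := (LinearMap.linearEquivOfInjective e he rfl).toAffineEquiv.trans
    (AffineEquiv.constVAdd k (k × k) P)
  refine ⟨G.symm, ?_, ?_, ?_⟩ <;> rw [AffineEquiv.symm_apply_eq] <;> simp [G, e]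

/-- The hypotheses of the theorem, bundled so that an affine change of coordinates can move them
all at once. -/
structure FiveAxesConfig (A B C' : ZMod 5 → k × k) (l g : ZMod 5 → AffineSubspace k (k × k))
    (Bpt : k × k) : Prop where
  l_eq : ∀ i, l i = line[k, A (i - 1), A (i + 1)]
  collinear : Collinear k {A 1, A 4, A 0}
  not_collinear : ∀ i j m : ZMod 5, i ≠ j → j ≠ m → i ≠ m →
    ({i, j, m} : Set (ZMod 5)) ≠ {0, 1, 4} → ¬ Collinear k {A i, A j, A m}
  not_parallel : ∀ i, ¬ l i ∥ l (i + 1)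
  B_mem : ∀ i, B i ∈ l i ∧ B i ∈ l (i + 1)
  C'_spec : ∀ i, i ≠ 0 → C' i ∈ l i ∧
    ratio (C' i) (B (i - 1)) (C' i) (B i) = ratio (B (i - 1)) (A (i + 1)) (B i) (A (i - 1))
  g_eq : ∀ i, i ≠ 0 → g i = line[k, A i, C' i]
  Bpt_eq₁ : ∃ s : k, Bpt = A 4 + s • (A 2 - A 0)
  Bpt_eq₂ : ∃ t : k, Bpt = A 1 + t • (A 3 - A 0)
  g_zero : g 0 = line[k, A 0, Bpt]

namespace FiveAxesConfig

variable {A B C' : ZMod 5 → k × k} {l g : ZMod 5 → AffineSubspace k (k × k)} {Bpt : k × k}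

theorem map (h : FiveAxesConfig A B C' l g Bpt) (F : (k × k) ≃ᵃ[k] (k × k)) :
    FiveAxesConfig (fun i => F (A i)) (fun i => F (B i)) (fun i => F (C' i))
      (fun i => (l i).map F.toAffineMap) (fun i => (g i).map F.toAffineMap) (F Bpt) where
  l_eq i := by rw [h.l_eq, AffineSubspace.map_span, Set.image_pair]; rfl
  collinear := by
    simpa [Set.image_insert_eq, Set.image_pair] using h.collinear.map F.toAffineMap
  not_collinear i j m hij hjm him hS hcol := h.not_collinear i j m hij hjm him hS <| by
    simpa [Set.image_insert_eq, Set.image_pair] using hcol.map F.symm.toAffineMap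
  not_parallel i hpar := h.not_parallel i <| by
    simpa [AffineSubspace.map_symm,
      AffineSubspace.comap_map_eq_of_injective (f := F.toAffineMap) F.injective]
      using hpar.map F.symm.toAffineMap
  B_mem i := ⟨AffineSubspace.mem_map_of_mem _ (h.B_mem i).1,
    AffineSubspace.mem_map_of_mem _ (h.B_mem i).2⟩
  C'_spec i hi := ⟨AffineSubspace.mem_map_of_mem _ (h.C'_spec i hi).1, by
    simpa only [ratio_map] using (h.C'_spec i hi).2⟩
  g_eq i hi := by rw [h.g_eq i hi, AffineSubspace.map_span, Set.image_pair]; rfl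
  Bpt_eq₁ := by
    obtain ⟨s, hs⟩ := h.Bpt_eq₁
    exact ⟨s, by rw [hs, apply_add_smul_sub]⟩
  Bpt_eq₂ := by
    obtain ⟨t, ht⟩ := h.Bpt_eq₂
    exact ⟨t, by rw [ht, apply_add_smul_sub]⟩
  g_zero := by rw [h.g_zero, AffineSubspace.map_span, Set.image_pair]; rfl

theorem not_collinear_of_finset (h : FiveAxesConfig A B C' l g Bpt) {i j m : ZMod 5}
    (hijm : i ≠ j ∧ j ≠ m ∧ i ≠ m ∧ ({i, j, m} : Finset (ZMod 5)) ≠ {0, 1, 4}) :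
    ¬ Collinear k {A i, A j, A m} :=
  h.not_collinear i j m hijm.1 hijm.2.1 hijm.2.2.1 fun hS =>
    hijm.2.2.2 (Finset.coe_injective (by simpa using hS))

theorem ne_add_two (h : FiveAxesConfig A B C' l g Bpt) (j : ZMod 5) : A j ≠ A (j + 2) := by
  intro hA
  have hidx : ∀ j : ZMod 5, j ≠ j + 2 ∧ j + 2 ≠ j + 3 ∧ j ≠ j + 3 ∧
      ({j, j + 2, j + 3} : Finset (ZMod 5)) ≠ {0, 1, 4} := by decide
  refine h.not_collinear_of_finset (hidx j) ?_
  rw [← hA, Set.insert_eq_of_mem (Set.mem_insert _ _)]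
  exact collinear_pair k _ _

theorem l_eq_of (h : FiveAxesConfig A B C' l g Bpt) {i j m : ZMod 5} (hj : j = i - 1)
    (hm : m = i + 1) : l i = line[k, A j, A m] := by
  rw [h.l_eq, hj, hm]

theorem C'_eq (h : FiveAxesConfig A B C' l g Bpt) {i : ZMod 5} (hi : i ≠ 0) :
    C' i = axisPoint (A (i - 2)) (A (i - 1)) (A i) (A (i + 1)) (A (i + 2)) ∧
      axisDen (A (i - 2)) (A (i - 1)) (A i) (A (i + 1)) (A (i + 2)) ≠ 0 := by
  have hl₀ : l (i - 1) = line[k, A (i - 2), A i] := h.l_eq_of (by ring) (by ring)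
  have hl₁ : l i = line[k, A (i - 1), A (i + 1)] := h.l_eq i
  have hl₂ : l (i + 1) = line[k, A i, A (i + 2)] := h.l_eq_of (by ring) (by ring)
  have hpar₀ := h.not_parallel (i - 1)
  have hpar₁ := h.not_parallel i
  have hBm := h.B_mem (i - 1)
  have hBp := h.B_mem i
  have hC := h.C'_spec i hi
  rw [sub_add_cancel] at hpar₀ hBm
  rw [hl₀, hl₁] at hpar₀ hBm
  rw [hl₁, hl₂] at hpar₁ hBp
  rw [hl₁] at hC
  refine eq_axisPoint ?_ ?_ (h.ne_add_two i) hpar₀ hpar₁ ?_ ?_ hBm hBp hC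
  · simpa using h.ne_add_two (i - 2)
  · simpa [show i - 1 + 2 = i + 1 by ring] using h.ne_add_two (i - 1)
  · have hidx : ∀ i : ZMod 5, i + 1 ≠ i - 2 ∧ i - 2 ≠ i ∧ i + 1 ≠ i ∧
        ({i + 1, i - 2, i} : Finset (ZMod 5)) ≠ {0, 1, 4} := by decide
    exact h.not_collinear_of_finset (hidx i)
  · have hidx : ∀ i : ZMod 5, i - 1 ≠ i ∧ i ≠ i + 2 ∧ i - 1 ≠ i + 2 ∧
        ({i - 1, i, i + 2} : Finset (ZMod 5)) ≠ {0, 1, 4} := by decide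
    exact h.not_collinear_of_finset (hidx i)

theorem Bpt_eq (h : FiveAxesConfig A B C' l g Bpt) :
    Bpt = (cross (A 1 - A 4) (A 3 - A 0) / cross (A 2 - A 0) (A 3 - A 0)) • (A 2 - A 0) + A 4 ∧
      cross (A 2 - A 0) (A 3 - A 0) ≠ 0 := by
  obtain ⟨s, hs⟩ := h.Bpt_eq₁
  obtain ⟨t, ht⟩ := h.Bpt_eq₂
  have hd : cross (A 2 - A 0) (A 3 - A 0) ≠ 0 := fun hd =>
    h.not_collinear_of_finset (i := 0) (j := 2) (m := 3) (by decide)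
      (collinear_iff_cross_eq_zero.2 hd)
  refine ⟨?_, hd⟩
  rw [hs, ← eq_div_of_mul_eq hd (mul_cross_eq_of_add_smul_eq (hs.symm.trans ht)), add_comm]

theorem ne_axis (h : FiveAxesConfig A B C' l g Bpt) (i : ZMod 5) :
    A i ≠ if i = 0 then Bpt else C' i := by
  split_ifs with hi
  · subst hi
    intro hA
    obtain ⟨s, hs⟩ := h.Bpt_eq₁
    refine h.not_collinear_of_finset (i := 0) (j := 2) (m := 4) (by decide)
      (collinear_iff_cross_eq_zero.2 ?_)
    have e := congrArg (A 4 - ·) (hA.trans hs)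
    simp only [sub_add_cancel_left] at e
    rw [e]
    simp only [cross, Prod.fst_neg, Prod.snd_neg, Prod.smul_fst, Prod.smul_snd, smul_eq_mul]
    ring
  · intro hA
    have hidx : ∀ i : ZMod 5, i ≠ 0 → i ≠ i - 1 ∧ i - 1 ≠ i + 1 ∧ i ≠ i + 1 ∧
        ({i, i - 1, i + 1} : Finset (ZMod 5)) ≠ {0, 1, 4} := by decide
    refine h.not_collinear_of_finset (hidx i hi) (collinear_insert_of_mem_affineSpan_pair ?_)
    rw [hA, ← h.l_eq]
    exact (h.C'_spec i hi).1

end FiveAxesConfig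

theorem cross_axisPoint_sub_std {A : ZMod 5 → k × k} {a b L : k} (h₀ : A 0 = (L * a, L * b))
    (h₁ : A 1 = 0) (h₂ : A 2 = (1, 0)) (h₃ : A 3 = (0, 1)) (h₄ : A 4 = (a, b)) {i : ZMod 5}
    (hi : i ≠ 0) (hE : axisDen (A (i - 2)) (A (i - 1)) (A i) (A (i + 1)) (A (i + 2)) ≠ 0) :
    cross (axisPoint (A (i - 2)) (A (i - 1)) (A i) (A (i + 1)) (A (i + 2)) - A i)
      ((a ^ 2 * L, b * (a * L - 1)) - (a + a * L + b * L - b - 1) • A i) = 0 := by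
  rw [axisPoint, lineMap_apply, vsub_eq_sub, vadd_eq_add]
  refine cross_div_smul_add_sub_eq_zero hE ?_
  have hidx : ∀ i : ZMod 5, i ≠ 0 →
      (i - 2 = 4 ∧ i - 1 = 0 ∧ i + 1 = 2 ∧ i + 2 = 3 ∧ i = 1) ∨
      (i - 2 = 0 ∧ i - 1 = 1 ∧ i + 1 = 3 ∧ i + 2 = 4 ∧ i = 2) ∨
      (i - 2 = 1 ∧ i - 1 = 2 ∧ i + 1 = 4 ∧ i + 2 = 0 ∧ i = 3) ∨
      (i - 2 = 2 ∧ i - 1 = 3 ∧ i + 1 = 0 ∧ i + 2 = 1 ∧ i = 4) := by decide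
  rcases hidx i hi with ⟨e₀, e₁, e₃, e₄, e₂⟩ | ⟨e₀, e₁, e₃, e₄, e₂⟩ | ⟨e₀, e₁, e₃, e₄, e₂⟩ |
    ⟨e₀, e₁, e₃, e₄, e₂⟩ <;> rw [e₀, e₁, e₃, e₄, e₂] <;>
    simp only [h₀, h₁, h₂, h₃, h₄, axisNum, axisDen, cross, zero_sub, sub_zero, smul_zero,
      neg_zero, Prod.neg_mk, Prod.mk_sub_mk, Prod.smul_mk, smul_eq_mul] <;> ring

theorem cross_Bpt_sub_std {A : ZMod 5 → k × k} {a b L : k} (h₀ : A 0 = (L * a, L * b))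
    (h₁ : A 1 = 0) (h₂ : A 2 = (1, 0)) (h₃ : A 3 = (0, 1)) (h₄ : A 4 = (a, b))
    (hd : cross (A 2 - A 0) (A 3 - A 0) ≠ 0) :
    cross ((cross (A 1 - A 4) (A 3 - A 0) / cross (A 2 - A 0) (A 3 - A 0)) • (A 2 - A 0) + A 4
      - A 0) ((a ^ 2 * L, b * (a * L - 1)) - (a + a * L + b * L - b - 1) • A 0) = 0 := by
  refine cross_div_smul_add_sub_eq_zero hd ?_
  simp only [h₀, h₁, h₂, h₃, h₄, cross, zero_sub, Prod.neg_mk, Prod.mk_sub_mk, Prod.smul_mk,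
    smul_eq_mul]
  ring

theorem FiveAxesConfig.inPencil_of_std {A B C' : ZMod 5 → k × k}
    {l g : ZMod 5 → AffineSubspace k (k × k)} {Bpt : k × k} (h : FiveAxesConfig A B C' l g Bpt)
    (h₁ : A 1 = 0) (h₂ : A 2 = (1, 0)) (h₃ : A 3 = (0, 1)) : InPencil g := by
  set a := (A 4).1
  set b := (A 4).2
  have h₄ : A 4 = (a, b) := rfl
  obtain ⟨L, h₀⟩ : ∃ L : k, A 0 = (L * a, L * b) := by
    have hcross := collinear_iff_cross_eq_zero.1 h.collinear
    rw [h₁, sub_zero, sub_zero] at hcross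
    exact exists_eq_smul_of_cross_eq_zero (h₁ ▸ h.ne_add_two 4) hcross
  have hL : L ≠ 0 := by
    rintro rfl
    refine h.not_collinear_of_finset (i := 0) (j := 1) (m := 2) (by decide)
      (collinear_iff_cross_eq_zero.2 ?_)
    simp [h₀, h₁, h₂, cross]
  have ha : a ≠ 0 := by
    intro ha
    refine h.not_collinear_of_finset (i := 1) (j := 3) (m := 4) (by decide)
      (collinear_iff_cross_eq_zero.2 ?_)
    simp [h₁, h₃, h₄, ha, cross]
  have hg : g = fun i => line[k, A i, if i = 0 then Bpt else C' i] := by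
    funext i
    split_ifs with hi
    · rw [hi, h.g_zero]
    · exact h.g_eq i hi
  rw [hg]
  refine inPencil_of_cross_eq_zero h.ne_axis (x := (a ^ 2 * L, b * (a * L - 1)))
    (z := a + a * L + b * L - b - 1) (Or.inl fun hx => ?_) fun i => ?_
  · simpa [ha, hL] using congrArg Prod.fst hx
  · split_ifs with hi
    · obtain ⟨hBpt, hd⟩ := h.Bpt_eq
      rw [hi, hBpt]
      exact cross_Bpt_sub_std h₀ h₁ h₂ h₃ h₄ hd
    · obtain ⟨hC, hE⟩ := h.C'_eq hi
      rw [hC]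
      exact cross_axisPoint_sub_std h₀ h₁ h₂ h₃ h₄ hi hE

end

/-- Degenerate five-axes theorem: `A₅` (here `A 0`) lies on `⟨A₁,A₄⟩` but no other
three of the points are collinear, and consecutive lines `lᵢ`, `l_{i+1}` are not
parallel.  For `i ≠ 5` the axis is `gᵢ = ⟨Aᵢ, Cᵢ⟩`; the axis `g₅` is `⟨A₅, B⟩`
where `B` is the intersection of the line through `A₄` parallel to `l₁ = ⟨A₅,A₂⟩`
with the line through `A₁` parallel to `l₄ = ⟨A₃,A₅⟩`.  Then all five axes lie
in a pencil. -/
theorem stmt11 {k : Type*} [Field k]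
    (A B C' : ZMod 5 → k × k) (l g : ZMod 5 → AffineSubspace k (k × k)) (Bpt : k × k)
    (hl : ∀ i, l i = affineSpan k ({A (i - 1), A (i + 1)} : Set (k × k)))
    (hdeg : Collinear k ({A 1, A 4, A 0} : Set (k × k)))
    (hncol : ∀ i j m : ZMod 5, i ≠ j → j ≠ m → i ≠ m →
      ({i, j, m} : Set (ZMod 5)) ≠ ({0, 1, 4} : Set (ZMod 5)) →
      ¬ Collinear k ({A i, A j, A m} : Set (k × k)))
    (hnp : ∀ i, ¬ (l i).Parallel (l (i + 1)))
    (hB : ∀ i, B i ∈ l i ∧ B i ∈ l (i + 1))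
    (hC : ∀ i, i ≠ 0 → C' i ∈ l i ∧
      ratio (C' i) (B (i - 1)) (C' i) (B i) = ratio (B (i - 1)) (A (i + 1)) (B i) (A (i - 1)))
    (hg : ∀ i, i ≠ 0 → g i = affineSpan k ({A i, C' i} : Set (k × k)))
    (hBpt1 : ∃ s : k, Bpt = A 4 + s • (A 2 - A 0))
    (hBpt2 : ∃ t : k, Bpt = A 1 + t • (A 3 - A 0))
    (hg0 : g 0 = affineSpan k ({A 0, Bpt} : Set (k × k))) :
    InPencil g := by
  have h : FiveAxesConfig A B C' l g Bpt := ⟨hl, hdeg, hncol, hnp, hB, hC, hg, hBpt1, hBpt2, hg0⟩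
  obtain ⟨F, h₁, h₂, h₃⟩ := exists_affineEquiv_of_not_collinear
    (h.not_collinear_of_finset (i := 1) (j := 2) (m := 3) (by decide))
  have hstd := ((h.map F).inPencil_of_std h₁ h₂ h₃).map F.symm.toAffineMap
  simpa [AffineSubspace.map_symm,
    AffineSubspace.comap_map_eq_of_injective (f := F.toAffineMap) F.injective] using hstd
end

section
/- Under the assumptions of the n-axes theorem, conditions (i) Aᵢ ∉ l_{i−2}, lᵢ, l_{i+2} for all i and (ii) l_{i−1} ≠ l_{i+1} for all i together are equivalent to the single condition: Aᵢ ∉ l_{i−3}, l_{i−2}, lᵢ, l_{i+2}, l_{i+3} for all i. In particular, for n ≤ 6 these conditions are equivalent to no three of the points being collinear. -/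
private lemma triple_rot {α : Type*} (a b c : α) : ({a, b, c} : Set α) = {b, c, a} := by
  ext x; simp only [Set.mem_insert_iff, Set.mem_singleton_iff]; tauto

private lemma col_iff_mem {k : Type*} [Field k] {P Q R : k × k} (h : P ≠ Q) :
    R ∈ affineSpan k ({P, Q} : Set (k × k)) ↔ Collinear k ({P, Q, R} : Set (k × k)) := by
  constructor
  · intro hR
    have := collinear_insert_of_mem_affineSpan_pair hR
    rwa [triple_rot] at this
  · intro hc
    exact hc.mem_affineSpan_of_mem_of_ne (by simp) (by simp) (by simp) h

private lemma span_pair_eq_iff {k : Type*} [Field k] {P Q R : k × k} (hPQ : P ≠ Q) (hQR : Q ≠ R) :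
    affineSpan k ({P, Q} : Set (k × k)) = affineSpan k ({Q, R} : Set (k × k)) ↔
      Collinear k ({P, Q, R} : Set (k × k)) := by
  constructor
  · intro h
    have hP : P ∈ affineSpan k ({Q, R} : Set (k × k)) := by
      rw [← h]; exact mem_affineSpan k (by simp)
    have := (col_iff_mem hQR).mp hP
    rwa [← triple_rot] at this
  · intro hc
    apply le_antisymm
    · rw [affineSpan_le]
      intro x hx
      simp only [Set.mem_insert_iff, Set.mem_singleton_iff] at hx
      rcases hx with rfl | rfl
      · have hc' := hc
        rw [triple_rot] at hc'
        exact (col_iff_mem hQR).mpr hc'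
      · exact mem_affineSpan k (by simp)
    · rw [affineSpan_le]
      intro x hx
      simp only [Set.mem_insert_iff, Set.mem_singleton_iff] at hx
      rcases hx with rfl | rfl
      · exact mem_affineSpan k (by simp)
      · exact (col_iff_mem hPQ).mpr hc

/-- For distinct points `A i` (indices mod `n`) with `lᵢ = ⟨A_{i−1}, A_{i+1}⟩`, the
conditions (i) `Aᵢ ∉ l_{i−2}, lᵢ, l_{i+2}` and (ii) `l_{i−1} ≠ l_{i+1}` together are
equivalent to `Aᵢ ∉ l_{i−3}, l_{i−2}, lᵢ, l_{i+2}, l_{i+3}` for all `i`; and for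
`n ≤ 6` they are equivalent to no three of the points being collinear. -/
theorem stmt18 {k : Type*} [Field k] (n : ℕ) (hn : 5 ≤ n)
    (A : ZMod n → k × k) (l : ZMod n → AffineSubspace k (k × k))
    (hinj : Function.Injective A)
    (hl : ∀ i, l i = affineSpan k ({A (i - 1), A (i + 1)} : Set (k × k))) :
    (((∀ i, A i ∉ l (i - 2) ∧ A i ∉ l i ∧ A i ∉ l (i + 2)) ∧ (∀ i, l (i - 1) ≠ l (i + 1)))
      ↔ (∀ i, A i ∉ l (i - 3) ∧ A i ∉ l (i - 2) ∧ A i ∉ l i ∧ A i ∉ l (i + 2) ∧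
          A i ∉ l (i + 3))) ∧
    (n ≤ 6 →
      (((∀ i, A i ∉ l (i - 2) ∧ A i ∉ l i ∧ A i ∉ l (i + 2)) ∧ (∀ i, l (i - 1) ≠ l (i + 1)))
        ↔ ∀ i j m : ZMod n, i ≠ j → j ≠ m → i ≠ m →
            ¬ Collinear k ({A i, A j, A m} : Set (k × k)))) := by
  have hz : ∀ d : ℕ, 0 < d → d < n → (d : ZMod n) ≠ 0 := by
    intro d hd1 hd2 h
    rw [ZMod.natCast_eq_zero_iff] at h
    have := Nat.le_of_dvd hd1 h
    omega
  have h1 : (1 : ZMod n) ≠ 0 := by have := hz 1 (by norm_num) (by omega); simpa using this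
  have h2 : (2 : ZMod n) ≠ 0 := by have := hz 2 (by norm_num) (by omega); simpa using this
  have h3 : (3 : ZMod n) ≠ 0 := by have := hz 3 (by norm_num) (by omega); simpa using this
  have h4 : (4 : ZMod n) ≠ 0 := by have := hz 4 (by norm_num) (by omega); simpa using this
  have hne : ∀ (x y c : ZMod n), c ≠ 0 → y - x = c → x ≠ y := by
    intro x y c hc he h
    exact hc (by rw [← he, h, sub_self])
  have hAd : ∀ (x y c : ZMod n), c ≠ 0 → y - x = c → A x ≠ A y := by
    intro x y c hc he h
    exact hne x y c hc he (hinj h)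
  have memIff : ∀ (j c : ZMod n),
      A c ∈ l j ↔ Collinear k ({A (j - 1), A (j + 1), A c} : Set (k × k)) := by
    intro j c
    rw [hl j]
    exact col_iff_mem (hAd (j - 1) (j + 1) 2 h2 (by ring))
  have hll : ∀ i : ZMod n,
      l (i - 1) = l (i + 1) ↔ Collinear k ({A (i - 2), A i, A (i + 2)} : Set (k × k)) := by
    intro i
    rw [hl, hl]
    rw [show i - 1 - 1 = i - 2 from by ring, show i - 1 + 1 = i from by ring,
        show i + 1 - 1 = i from by ring, show i + 1 + 1 = i + 2 from by ring]
    exact span_pair_eq_iff (hAd _ _ 2 h2 (by ring)) (hAd _ _ 2 h2 (by ring))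
  have main : ((∀ i, A i ∉ l (i - 2) ∧ A i ∉ l i ∧ A i ∉ l (i + 2)) ∧
      (∀ i, l (i - 1) ≠ l (i + 1)))
      ↔ (∀ i, A i ∉ l (i - 3) ∧ A i ∉ l (i - 2) ∧ A i ∉ l i ∧ A i ∉ l (i + 2) ∧
          A i ∉ l (i + 3)) := by
    constructor
    · rintro ⟨hi, hii⟩ i
      obtain ⟨ha, hb, hc⟩ := hi i
      refine ⟨?_, ha, hb, hc, ?_⟩
      · rw [memIff]
        rw [show i - 3 - 1 = i - 2 - 2 from by ring, show i - 3 + 1 = i - 2 from by ring]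
        intro hcol
        apply hii (i - 2)
        rw [hll (i - 2), show i - 2 + 2 = i from by ring]
        exact hcol
      · rw [memIff]
        rw [show i + 3 - 1 = i + 2 from by ring, show i + 3 + 1 = i + 2 + 2 from by ring]
        intro hcol
        apply hii (i + 2)
        rw [hll (i + 2), show i + 2 - 2 = i from by ring]
        rwa [triple_rot]
    · intro hbig
      constructor
      · intro i
        obtain ⟨_, hb, hc, hd, _⟩ := hbig i
        exact ⟨hb, hc, hd⟩
      · intro i hEq
        have h5 := (hbig (i + 2)).1
        apply h5
        rw [show i + 2 - 3 = i - 1 from by ring, hEq, hl,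
            show i + 1 + 1 = i + 2 from by ring]
        exact mem_affineSpan k (by simp)
  refine ⟨main, fun h6 => ⟨?_, ?_⟩⟩
  · intro hcond i j m hij hjm him
    have hbig := main.mp hcond
    have H1 : ∀ a : ZMod n, ¬ Collinear k ({A (a - 1), A (a + 1), A a} : Set (k × k)) := by
      intro a
      have := (hbig a).2.2.1
      rwa [memIff] at this
    have H0 : ∀ a : ZMod n, ¬ Collinear k ({A (a - 3), A (a - 1), A a} : Set (k × k)) := by
      intro a
      have := (hbig a).2.1
      rwa [memIff, show a - 2 - 1 = a - 3 from by ring,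
        show a - 2 + 1 = a - 1 from by ring] at this
    have H2 : ∀ a : ZMod n, ¬ Collinear k ({A (a + 1), A (a + 3), A a} : Set (k × k)) := by
      intro a
      have := (hbig a).2.2.2.1
      rwa [memIff, show a + 2 - 1 = a + 1 from by ring,
        show a + 2 + 1 = a + 3 from by ring] at this
    have H3 : ∀ a : ZMod n, ¬ Collinear k ({A (a + 2), A (a + 4), A a} : Set (k × k)) := by
      intro a
      have := (hbig a).2.2.2.2
      rwa [memIff, show a + 3 - 1 = a + 2 from by ring,
        show a + 3 + 1 = a + 4 from by ring] at this
    have hsets : ∀ (u v w : ZMod n), ({i, j, m} : Finset (ZMod n)) = {u, v, w} →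
        ({A i, A j, A m} : Set (k × k)) = {A u, A v, A w} := by
      intro u v w h
      have h' : ({i, j, m} : Set (ZMod n)) = {u, v, w} := by
        have := congrArg (fun s : Finset (ZMod n) => (s : Set (ZMod n))) h
        simpa using this
      calc ({A i, A j, A m} : Set (k × k)) = A '' {i, j, m} := by
              simp [Set.image_insert_eq]
        _ = A '' {u, v, w} := by rw [h']
        _ = {A u, A v, A w} := by simp [Set.image_insert_eq]
    have hn56 : n = 5 ∨ n = 6 := by omega
    rcases hn56 with rfl | rfl
    · have key : ∀ i j m : ZMod 5, i ≠ j → j ≠ m → i ≠ m →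
          ∃ a : ZMod 5, ({i, j, m} : Finset (ZMod 5)) = {a - 1, a + 1, a} ∨
            ({i, j, m} : Finset (ZMod 5)) = {a + 1, a + 3, a} ∨
            ({i, j, m} : Finset (ZMod 5)) = {a + 2, a + 4, a} ∨
            ({i, j, m} : Finset (ZMod 5)) = {a - 3, a - 1, a} := by decide
      obtain ⟨a, h | h | h | h⟩ := key i j m hij hjm him
      · rw [hsets _ _ _ h]; exact H1 a
      · rw [hsets _ _ _ h]; exact H2 a
      · rw [hsets _ _ _ h]; exact H3 a
      · rw [hsets _ _ _ h]; exact H0 a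
    · have key : ∀ i j m : ZMod 6, i ≠ j → j ≠ m → i ≠ m →
          ∃ a : ZMod 6, ({i, j, m} : Finset (ZMod 6)) = {a - 1, a + 1, a} ∨
            ({i, j, m} : Finset (ZMod 6)) = {a + 1, a + 3, a} ∨
            ({i, j, m} : Finset (ZMod 6)) = {a + 2, a + 4, a} ∨
            ({i, j, m} : Finset (ZMod 6)) = {a - 3, a - 1, a} := by decide
      obtain ⟨a, h | h | h | h⟩ := key i j m hij hjm him
      · rw [hsets _ _ _ h]; exact H1 a
      · rw [hsets _ _ _ h]; exact H2 a
      · rw [hsets _ _ _ h]; exact H3 a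
      · rw [hsets _ _ _ h]; exact H0 a
  · intro hNC
    apply main.mpr
    intro i
    refine ⟨?_, ?_, ?_, ?_, ?_⟩
    · rw [memIff]
      exact hNC _ _ _ (hne _ _ 2 h2 (by ring)) (hne _ _ 2 h2 (by ring))
        (hne _ _ 4 h4 (by ring))
    · rw [memIff]
      exact hNC _ _ _ (hne _ _ 2 h2 (by ring)) (hne _ _ 1 h1 (by ring))
        (hne _ _ 3 h3 (by ring))
    · rw [memIff]
      exact hNC _ _ _ (hne _ _ 2 h2 (by ring)) ((hne _ _ 1 h1 (by ring)).symm)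
        (hne _ _ 1 h1 (by ring))
    · rw [memIff]
      exact hNC _ _ _ (hne _ _ 2 h2 (by ring)) ((hne _ _ 3 h3 (by ring)).symm)
        ((hne _ _ 1 h1 (by ring)).symm)
    · rw [memIff]
      exact hNC _ _ _ (hne _ _ 2 h2 (by ring)) ((hne _ _ 4 h4 (by ring)).symm)
        ((hne _ _ 2 h2 (by ring)).symm)
end
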